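/- arXiv:gr-qc/9512039 — 4 statements merged into one kernel-verified Lean document; each statement's English description precedes it below -/
import Mathlib

section
/- The retarded-time function u is smooth on the region Ω = {x : r(x) > 0} (the complement of the world line), and its gradient satisfies ∂u/∂x^a = −k_a for a = 0,1,2,3, where k_a = η_{ab}k^b. -/
open scoped BigOperators

noncomputable section

/-- The Minkowski metric η = diag(−1,1,1,1) on ℝ⁴. -/
def eta (i j : Fin 4) : ℝ := if i = j then (if i = 0 then -1 else 1) else 0

/-- Minkowski inner product a·b = η_{ij} a^i b^j. -/
def mdot (a b : Fin 4 → ℝ) : ℝ := ∑ i, ∑ j, eta i j * a i * b j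

/-- Lowering an index with η : k_i = η_{ij} k^j. -/
def lo (a : Fin 4 → ℝ) (i : Fin 4) : ℝ := ∑ j, eta i j * a j

/-! The retarded time is the past root `τ = u x` of the light-cone equation
`Φ(x, τ) = (x − z τ)·(x − z τ) = 0`. Its `τ`-derivative is `−2 v·(x − z τ) = 2 r`, nonzero
off the world line, so the implicit function theorem gives a smooth local root near `(x, u x)`.
That root is `u`: a nonzero null vector with nonnegative time component has positive time
component, so lying in the past is an open condition and the uniqueness of the past root
applies. Differentiating `Φ(x, u x) = 0` gives `2 (x − z)_a + 2 r ∂_a u = 0`, i.e.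
`∂_a u = −k_a`. -/

open Filter Topology

section ImplicitFunction

variable {𝕜 : Type*} [RCLike 𝕜]
  {E₁ : Type*} [NormedAddCommGroup E₁] [NormedSpace 𝕜 E₁] [CompleteSpace E₁]
  {E₂ : Type*} [NormedAddCommGroup E₂] [NormedSpace 𝕜 E₂] [CompleteSpace E₂]
  {F : Type*} [NormedAddCommGroup F] [NormedSpace 𝕜 F] [CompleteSpace F]

theorem contDiffAt_of_eventually_unique_solution {f : E₁ × E₂ → F} {p : E₁ × E₂}
    {n : WithTop ℕ∞} (hf : ContDiffAt 𝕜 n f p) (hn : n ≠ 0)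
    (hinv : (fderiv 𝕜 f p ∘L .inr 𝕜 E₁ E₂).IsInvertible) {g : E₁ → E₂}
    (hg : ∀ᶠ q in 𝓝 p, f q = f p → g q.1 = q.2) : ContDiffAt 𝕜 n g p.1 := by
  set ψ := hf.implicitFunction hn hinv
  have hψ : ContDiffAt 𝕜 n ψ p.1 := hf.contDiffAt_implicitFunction hn hinv
  have hgraph : Tendsto (fun x => (x, ψ x)) (𝓝 p.1) (𝓝 p) := by
    have hψp : ψ p.1 = p.2 := hf.implicitFunction_apply_self hn hinv
    simpa only [ContinuousAt, id, hψp, Prod.mk.eta] using continuousAt_id.prodMk hψ.continuousAt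
  have hgψ : g =ᶠ[𝓝 p.1] ψ := by
    filter_upwards [hgraph.eventually hg,
      hgraph.eventually (hf.eventually_apply_eq_iff_implicitFunction hn hinv)] with x hgx hψx
    exact hgx (hψx.2 rfl)
  exact hψ.congr_of_eventuallyEq hgψ

end ImplicitFunction

section ImplicitDerivative

variable {𝕜 : Type*} [NontriviallyNormedField 𝕜]
  {E₁ : Type*} [NormedAddCommGroup E₁] [NormedSpace 𝕜 E₁]
  {E₂ : Type*} [NormedAddCommGroup E₂] [NormedSpace 𝕜 E₂]
  {F : Type*} [NormedAddCommGroup F] [NormedSpace 𝕜 F]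

theorem fderiv_apply_prodMk_fderiv_eq_zero {f : E₁ × E₂ → F} {g : E₁ → E₂} {x : E₁}
    {c : F} (hf : DifferentiableAt 𝕜 f (x, g x)) (hg : DifferentiableAt 𝕜 g x)
    (hfg : ∀ᶠ y in 𝓝 x, f (y, g y) = c) (h : E₁) :
    fderiv 𝕜 f (x, g x) (h, fderiv 𝕜 g x h) = 0 := by
  have hchain : HasFDerivAt (fun y => f (y, g y))
      (fderiv 𝕜 f (x, g x) ∘L (ContinuousLinearMap.id 𝕜 E₁).prod (fderiv 𝕜 g x)) x :=
    hf.hasFDerivAt.comp x ((hasFDerivAt_id x).prodMk hg.hasFDerivAt)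
  have hconst : HasFDerivAt (fun y => f (y, g y)) (0 : E₁ →L[𝕜] F) x :=
    (hasFDerivAt_const c x).congr_of_eventuallyEq hfg
  simpa using congrArg (· h) (hchain.unique hconst)

end ImplicitDerivative

theorem ContinuousLinearMap.isInvertible_of_apply_one_ne_zero {𝕜 : Type*} [NormedField 𝕜]
    {L : 𝕜 →L[𝕜] 𝕜} (hL : L 1 ≠ 0) : L.IsInvertible :=
  .of_inverse (g := (L 1)⁻¹ • .id 𝕜 𝕜) (by ext; simp [hL]) (by ext; simp [hL])

theorem eta_comm (i j : Fin 4) : eta i j = eta j i := by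
  unfold eta; split_ifs <;> simp_all

theorem mdot_comm (a b : Fin 4 → ℝ) : mdot a b = mdot b a := by
  rw [mdot, mdot, Finset.sum_comm]
  exact Finset.sum_congr rfl fun i _ => Finset.sum_congr rfl fun j _ => by rw [eta_comm]; ring

def mdotL : (Fin 4 → ℝ) →L[ℝ] (Fin 4 → ℝ) →L[ℝ] ℝ :=
  (Matrix.toLinearMap₂' ℝ (Matrix.of eta)).toContinuousBilinearMap

@[simp]
theorem mdotL_apply (a b : Fin 4 → ℝ) : mdotL a b = mdot a b := by
  rw [mdotL, LinearMap.toContinuousBilinearMap_apply, Matrix.toLinearMap₂'_apply, mdot]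
  exact Finset.sum_congr rfl fun i _ => Finset.sum_congr rfl fun j _ => by simp; ring

theorem mdot_single_right (a : Fin 4 → ℝ) (i : Fin 4) : mdot a (Pi.single i 1) = lo a i := by
  rw [mdot_comm]
  simp [mdot, lo, Pi.single_apply]

theorem lo_smul (c : ℝ) (a : Fin 4 → ℝ) (i : Fin 4) : lo (c • a) i = c * lo a i := by
  simp only [← mdot_single_right, ← mdotL_apply, map_smul]
  rfl

theorem mdot_self (w : Fin 4 → ℝ) :
    mdot w w = -w 0 ^ 2 + (w 1 ^ 2 + w 2 ^ 2 + w 3 ^ 2) := by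
  simp [mdot, eta, Fin.sum_univ_four]
  ring

theorem eq_zero_of_mdot_self_eq_zero {w : Fin 4 → ℝ} (hnull : mdot w w = 0) (h0 : w 0 = 0) :
    w = 0 := by
  rw [mdot_self, h0] at hnull
  have h1 : w 1 = 0 := by nlinarith [sq_nonneg (w 1), sq_nonneg (w 2), sq_nonneg (w 3)]
  have h2 : w 2 = 0 := by nlinarith [sq_nonneg (w 1), sq_nonneg (w 2), sq_nonneg (w 3)]
  have h3 : w 3 = 0 := by nlinarith [sq_nonneg (w 1), sq_nonneg (w 2), sq_nonneg (w 3)]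
  ext i; fin_cases i <;> assumption

theorem time_pos_of_null {v w : Fin 4 → ℝ} (hnull : mdot w w = 0) (h0 : 0 ≤ w 0)
    (hvw : mdot v w ≠ 0) : 0 < w 0 := by
  refine h0.lt_of_ne fun hw0 => hvw ?_
  rw [eq_zero_of_mdot_self_eq_zero hnull hw0.symm, ← mdotL_apply, map_zero]

def lightCone (z : ℝ → Fin 4 → ℝ) (p : (Fin 4 → ℝ) × ℝ) : ℝ :=
  mdot (p.1 - z p.2) (p.1 - z p.2)

section LightCone

variable {z : ℝ → Fin 4 → ℝ}

theorem lightCone_eq_mdotL : lightCone z = fun p => mdotL (p.1 - z p.2) (p.1 - z p.2) :=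
  funext fun _ => (mdotL_apply _ _).symm

theorem contDiff_lightCone {n : WithTop ℕ∞} (hz : ContDiff ℝ n z) :
    ContDiff ℝ n (lightCone z) := by
  rw [lightCone_eq_mdotL]
  have hw : ContDiff ℝ n fun p : (Fin 4 → ℝ) × ℝ => p.1 - z p.2 :=
    contDiff_fst.sub (hz.comp contDiff_snd)
  exact (mdotL.contDiff.comp hw).clm_apply hw

theorem hasFDerivAt_sub_worldline {τ : ℝ} (hz : DifferentiableAt ℝ z τ)
    (x : Fin 4 → ℝ) :
    HasFDerivAt (fun p : (Fin 4 → ℝ) × ℝ => p.1 - z p.2)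
      (.fst ℝ _ ℝ - (ContinuousLinearMap.smulRight (1 : ℝ →L[ℝ] ℝ) (deriv z τ)).comp (.snd ℝ _ ℝ))
      (x, τ) :=
  hasFDerivAt_fst.sub (hz.hasDerivAt.hasFDerivAt.comp (x, τ) hasFDerivAt_snd)

theorem differentiableAt_lightCone {τ : ℝ} (hz : DifferentiableAt ℝ z τ)
    (x : Fin 4 → ℝ) : DifferentiableAt ℝ (lightCone z) (x, τ) :=
  lightCone_eq_mdotL (z := z) ▸ (mdotL.hasFDerivAt_of_bilinear (hasFDerivAt_sub_worldline hz x)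
    (hasFDerivAt_sub_worldline hz x)).differentiableAt

theorem fderiv_lightCone_apply {τ : ℝ} (hz : DifferentiableAt ℝ z τ)
    (x h : Fin 4 → ℝ) (s : ℝ) :
    fderiv ℝ (lightCone z) (x, τ) (h, s) = 2 * mdot (x - z τ) (h - s • deriv z τ) := by
  have hw := hasFDerivAt_sub_worldline hz x
  rw [lightCone_eq_mdotL, (mdotL.hasFDerivAt_of_bilinear hw hw).fderiv]
  simp only [add_apply, ContinuousLinearMap.precompR_apply, ContinuousLinearMap.compL_apply,
    ContinuousLinearMap.precompL_apply, sub_apply, ContinuousLinearMap.comp_apply,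
    ContinuousLinearMap.coe_fst', ContinuousLinearMap.coe_snd', ContinuousLinearMap.smulRight_apply,
    one_apply_eq_self, mdotL_apply]
  rw [mdot_comm (h - _)]
  ring

end LightCone

section RetardedTime

variable {z : ℝ → Fin 4 → ℝ} {u : (Fin 4 → ℝ) → ℝ}

theorem contDiffAt_retardedTime {n : WithTop ℕ∞} (hz : ContDiff ℝ n z) (hn : n ≠ 0)
    (hnull : ∀ x, mdot (x - z (u x)) (x - z (u x)) = 0)
    (huniq : ∀ x τ, mdot (x - z τ) (x - z τ) = 0 → z τ 0 ≤ x 0 → τ = u x)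
    {x : Fin 4 → ℝ} (hpast : z (u x) 0 ≤ x 0) (hr : mdot (deriv z (u x)) (x - z (u x)) ≠ 0) :
    ContDiffAt ℝ n u x := by
  have hinv : (fderiv ℝ (lightCone z) (x, u x) ∘L .inr ℝ _ ℝ).IsInvertible := by
    refine ContinuousLinearMap.isInvertible_of_apply_one_ne_zero ?_
    rw [ContinuousLinearMap.comp_apply, ContinuousLinearMap.inr_apply,
      fderiv_lightCone_apply (hz.differentiable hn _), zero_sub, one_smul, ← mdotL_apply, map_neg,
      mdotL_apply, mdot_comm]
    simpa using hr
  have hlater : ∀ᶠ q in 𝓝 (x, u x), z q.2 0 < q.1 0 := by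
    have hzc := hz.continuous
    have hcont : Continuous fun q : (Fin 4 → ℝ) × ℝ => q.1 0 - z q.2 0 := by fun_prop
    have hpos : 0 < x 0 - z (u x) 0 :=
      time_pos_of_null (hnull x) (sub_nonneg.2 hpast) hr
    filter_upwards [hcont.continuousAt.eventually (eventually_gt_nhds hpos)] with q hq
    exact sub_pos.1 hq
  refine contDiffAt_of_eventually_unique_solution (p := (x, u x))
    (contDiff_lightCone hz).contDiffAt hn hinv ?_
  filter_upwards [hlater] with q hq hcone
  exact (huniq q.1 q.2 (hcone.trans (hnull x)) hq.le).symm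

theorem fderiv_retardedTime_mul (hz : Differentiable ℝ z)
    (hnull : ∀ x, mdot (x - z (u x)) (x - z (u x)) = 0)
    {x : Fin 4 → ℝ} (hu : DifferentiableAt ℝ u x) (h : Fin 4 → ℝ) :
    fderiv ℝ u x h * mdot (deriv z (u x)) (x - z (u x)) = mdot (x - z (u x)) h := by
  have hcone := fderiv_apply_prodMk_fderiv_eq_zero (differentiableAt_lightCone (hz _) x) hu
    (.of_forall hnull) h
  rw [fderiv_lightCone_apply (hz _), ← mdotL_apply, map_sub, map_smul, mdotL_apply, mdotL_apply,
    smul_eq_mul, mdot_comm (x - z (u x)) (deriv z _)] at hcone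
  linarith

end RetardedTime

theorem retarded_time_smooth_gradient_general
    (z : ℝ → Fin 4 → ℝ) (hz : ContDiff ℝ (⊤ : ℕ∞) z)
    (v : ℝ → Fin 4 → ℝ) (hv : ∀ τ i, v τ i = deriv (fun t => z t i) τ)
    (u : (Fin 4 → ℝ) → ℝ)
    (hu : ∀ x, mdot (x - z (u x)) (x - z (u x)) = 0 ∧ z (u x) 0 ≤ x 0)
    (huniq : ∀ x τ, mdot (x - z τ) (x - z τ) = 0 → z τ 0 ≤ x 0 → τ = u x)
    (r : (Fin 4 → ℝ) → ℝ)
    (hr : ∀ x, r x = -mdot (v (u x)) (x - z (u x)))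
    (k : (Fin 4 → ℝ) → Fin 4 → ℝ)
    (hk : ∀ x, k x = (r x)⁻¹ • (x - z (u x))) :
    ContDiffOn ℝ (⊤ : ℕ∞) u {x | 0 < r x} ∧
    ∀ x ∈ {x : Fin 4 → ℝ | 0 < r x}, ∀ a : Fin 4,
      fderiv ℝ u x (Pi.single a 1) = -(lo (k x) a) := by
  have hz₁ : Differentiable ℝ z := hz.differentiable (by simp)
  have hvz : v = deriv z := funext fun τ => by
    rw [deriv_pi fun i => differentiableAt_pi.1 (hz₁ τ) i]
    exact funext (hv τ)
  subst hvz
  have hnull x := (hu x).1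
  have hsmooth : ∀ x ∈ {x | 0 < r x}, ContDiffAt ℝ (⊤ : ℕ∞) u x := fun x hx =>
    contDiffAt_retardedTime hz (by simp) hnull huniq (hu x).2
      (neg_ne_zero.1 (hr x ▸ hx.ne'))
  refine ⟨fun x hx => (hsmooth x hx).contDiffWithinAt, fun x hx a => ?_⟩
  have hgrad := fderiv_retardedTime_mul hz₁ hnull
    ((hsmooth x hx).differentiableAt (by simp)) (Pi.single a 1)
  rw [mdot_single_right, ← neg_neg (mdot _ _), ← hr] at hgrad
  rw [hk, lo_smul]
  field_simp [(show 0 < r x from hx).ne']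
  linarith

/-- The retarded time `u` is smooth on the region Ω = {x | r x > 0} and its
gradient is `∂u/∂x^a = −k_a`. -/
theorem retarded_time_smooth_gradient
    (z : ℝ → Fin 4 → ℝ) (hz : ContDiff ℝ (⊤ : ℕ∞) z)
    (v : ℝ → Fin 4 → ℝ) (hv : ∀ τ i, v τ i = deriv (fun t => z t i) τ)
    (hunit : ∀ τ, mdot (v τ) (v τ) = -1)
    (hfut : ∀ τ, 0 < v τ 0)
    (u : (Fin 4 → ℝ) → ℝ)
    (hu : ∀ x, mdot (x - z (u x)) (x - z (u x)) = 0 ∧ z (u x) 0 ≤ x 0)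
    (huniq : ∀ x τ, mdot (x - z τ) (x - z τ) = 0 → z τ 0 ≤ x 0 → τ = u x)
    (r : (Fin 4 → ℝ) → ℝ)
    (hr : ∀ x, r x = -mdot (v (u x)) (x - z (u x)))
    (k : (Fin 4 → ℝ) → Fin 4 → ℝ)
    (hk : ∀ x, k x = (r x)⁻¹ • (x - z (u x))) :
    ContDiffOn ℝ (⊤ : ℕ∞) u {x | 0 < r x} ∧
    ∀ x ∈ {x : Fin 4 → ℝ | 0 < r x}, ∀ a : Fin 4,
      fderiv ℝ u x (Pi.single a 1) = -(lo (k x) a) :=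
  retarded_time_smooth_gradient_general z hz v hv u hu huniq r hr k hk
end
end

section
/- Let A be a real symmetric 4×4 matrix (A_{ij} = A_{ji}) and let k be a nonzero null vector (k·k = 0, k ≠ 0) such that A_{ij}k^j = 0 for every i (sum over j). Then A_{mn}A^{mn} − ½ (A^m{}_m)² ≥ 0, where A^{mn} = η^{ma}η^{nb}A_{ab} and A^m{}_m = η^{ma}A_{am} (sums over repeated indices). -/
open scoped BigOperators

noncomputable section

set_option maxHeartbeats 2000000

theorem aux (a00 a01 a02 a03 b11 b12 b13 b22 b23 b33 k0 k1 k2 k3 : ℝ)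
    (hk0 : k0 ≠ 0)
    (hs : k0^2 = k1^2+k2^2+k3^2)
    (h0 : a00*k0 + a01*k1 + a02*k2 + a03*k3 = 0)
    (h1 : a01*k0 + b11*k1 + b12*k2 + b13*k3 = 0)
    (h2 : a02*k0 + b12*k1 + b22*k2 + b23*k3 = 0)
    (h3 : a03*k0 + b13*k1 + b23*k2 + b33*k3 = 0) :
    0 ≤ (a00^2 - 2*a01^2 - 2*a02^2 - 2*a03^2
          + b11^2 + 2*b12^2 + 2*b13^2 + b22^2 + 2*b23^2 + b33^2)
        - (1/2) * (b11 + b22 + b33 - a00)^2 := by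
  have hspos : (0:ℝ) < k1^2+k2^2+k3^2 := by rw [← hs]; positivity
  have q1 : (k1^2+k2^2+k3^2)*a01^2 = (b11*k1+b12*k2+b13*k3)^2 := by
    linear_combination (a01*k0 - (b11*k1+b12*k2+b13*k3)) * h1 - a01^2 * hs
  have q2 : (k1^2+k2^2+k3^2)*a02^2 = (b12*k1+b22*k2+b23*k3)^2 := by
    linear_combination (a02*k0 - (b12*k1+b22*k2+b23*k3)) * h2 - a02^2 * hs
  have q3 : (k1^2+k2^2+k3^2)*a03^2 = (b13*k1+b23*k2+b33*k3)^2 := by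
    linear_combination (a03*k0 - (b13*k1+b23*k2+b33*k3)) * h3 - a03^2 * hs
  have q0 : (k1^2+k2^2+k3^2)*a00
      = (b11*k1+b12*k2+b13*k3)*k1+(b12*k1+b22*k2+b23*k3)*k2+(b13*k1+b23*k2+b33*k3)*k3 := by
    linear_combination k0*h0 - k1*h1 - k2*h2 - k3*h3 - a00*hs
  have key : (k1^2+k2^2+k3^2)^4 * (4*((a00^2 - 2*a01^2 - 2*a02^2 - 2*a03^2
          + b11^2 + 2*b12^2 + 2*b13^2 + b22^2 + 2*b23^2 + b33^2)
        - (1/2) * (b11 + b22 + b33 - a00)^2))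
      =
      (2*((k1^2+k2^2+k3^2)^2*b11 - 2*(k1^2+k2^2+k3^2)*k1*(b11*k1+b12*k2+b13*k3) + k1*k1*((b11*k1+b12*k2+b13*k3)*k1+(b12*k1+b22*k2+b23*k3)*k2+(b13*k1+b23*k2+b33*k3)*k3)) - ((k1^2+k2^2+k3^2)*(b11+b22+b33) - ((b11*k1+b12*k2+b13*k3)*k1+(b12*k1+b22*k2+b23*k3)*k2+(b13*k1+b23*k2+b33*k3)*k3))*((k1^2+k2^2+k3^2) - k1*k1))^2
    + (2*((k1^2+k2^2+k3^2)^2*b22 - 2*(k1^2+k2^2+k3^2)*k2*(b12*k1+b22*k2+b23*k3) + k2*k2*((b11*k1+b12*k2+b13*k3)*k1+(b12*k1+b22*k2+b23*k3)*k2+(b13*k1+b23*k2+b33*k3)*k3)) - ((k1^2+k2^2+k3^2)*(b11+b22+b33) - ((b11*k1+b12*k2+b13*k3)*k1+(b12*k1+b22*k2+b23*k3)*k2+(b13*k1+b23*k2+b33*k3)*k3))*((k1^2+k2^2+k3^2) - k2*k2))^2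
    + (2*((k1^2+k2^2+k3^2)^2*b33 - 2*(k1^2+k2^2+k3^2)*k3*(b13*k1+b23*k2+b33*k3) + k3*k3*((b11*k1+b12*k2+b13*k3)*k1+(b12*k1+b22*k2+b23*k3)*k2+(b13*k1+b23*k2+b33*k3)*k3)) - ((k1^2+k2^2+k3^2)*(b11+b22+b33) - ((b11*k1+b12*k2+b13*k3)*k1+(b12*k1+b22*k2+b23*k3)*k2+(b13*k1+b23*k2+b33*k3)*k3))*((k1^2+k2^2+k3^2) - k3*k3))^2
    + 2*(2*((k1^2+k2^2+k3^2)^2*b12 - (k1^2+k2^2+k3^2)*k1*(b12*k1+b22*k2+b23*k3) - (k1^2+k2^2+k3^2)*k2*(b11*k1+b12*k2+b13*k3) + k1*k2*((b11*k1+b12*k2+b13*k3)*k1+(b12*k1+b22*k2+b23*k3)*k2+(b13*k1+b23*k2+b33*k3)*k3)) - ((k1^2+k2^2+k3^2)*(b11+b22+b33) - ((b11*k1+b12*k2+b13*k3)*k1+(b12*k1+b22*k2+b23*k3)*k2+(b13*k1+b23*k2+b33*k3)*k3))*(0 - k1*k2))^2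
    + 2*(2*((k1^2+k2^2+k3^2)^2*b13 - (k1^2+k2^2+k3^2)*k1*(b13*k1+b23*k2+b33*k3) - (k1^2+k2^2+k3^2)*k3*(b11*k1+b12*k2+b13*k3) + k1*k3*((b11*k1+b12*k2+b13*k3)*k1+(b12*k1+b22*k2+b23*k3)*k2+(b13*k1+b23*k2+b33*k3)*k3)) - ((k1^2+k2^2+k3^2)*(b11+b22+b33) - ((b11*k1+b12*k2+b13*k3)*k1+(b12*k1+b22*k2+b23*k3)*k2+(b13*k1+b23*k2+b33*k3)*k3))*(0 - k1*k3))^2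
    + 2*(2*((k1^2+k2^2+k3^2)^2*b23 - (k1^2+k2^2+k3^2)*k2*(b13*k1+b23*k2+b33*k3) - (k1^2+k2^2+k3^2)*k3*(b12*k1+b22*k2+b23*k3) + k2*k3*((b11*k1+b12*k2+b13*k3)*k1+(b12*k1+b22*k2+b23*k3)*k2+(b13*k1+b23*k2+b33*k3)*k3)) - ((k1^2+k2^2+k3^2)*(b11+b22+b33) - ((b11*k1+b12*k2+b13*k3)*k1+(b12*k1+b22*k2+b23*k3)*k2+(b13*k1+b23*k2+b33*k3)*k3))*(0 - k2*k3))^2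
      := by
    linear_combination (2*(k1^2+k2^2+k3^2)^2*((k1^2+k2^2+k3^2)*a00
        + ((b11*k1+b12*k2+b13*k3)*k1+(b12*k1+b22*k2+b23*k3)*k2+(b13*k1+b23*k2+b33*k3)*k3))
        + 4*(k1^2+k2^2+k3^2)^3*(b11+b22+b33)) * q0
      - 8*(k1^2+k2^2+k3^2)^3*q1 - 8*(k1^2+k2^2+k3^2)^3*q2 - 8*(k1^2+k2^2+k3^2)^3*q3
  have hSOS : 0 ≤ (k1^2+k2^2+k3^2)^4 * (4*((a00^2 - 2*a01^2 - 2*a02^2 - 2*a03^2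
          + b11^2 + 2*b12^2 + 2*b13^2 + b22^2 + 2*b23^2 + b33^2)
        - (1/2) * (b11 + b22 + b33 - a00)^2)) := by
    rw [key]; positivity
  have h4 := (mul_nonneg_iff_of_pos_left (pow_pos hspos 4)).mp hSOS
  linarith

/-- If a real symmetric 4×4 matrix `A` annihilates a nonzero null vector `k`
(`A_{ij}k^j = 0`), then `A_{mn}A^{mn} − ½(A^m{}_m)² ≥ 0`. -/
theorem symm_matrix_null_annihilator_nonneg
    (A : Matrix (Fin 4) (Fin 4) ℝ) (hA : ∀ i j, A i j = A j i)
    (k : Fin 4 → ℝ) (hnull : mdot k k = 0) (hk : k ≠ 0)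
    (hAk : ∀ i, ∑ j, A i j * k j = 0) :
    0 ≤ (∑ m, ∑ n, (∑ a, ∑ b, eta m a * eta n b * A a b) * A m n)
        - (1 / 2) * (∑ m, ∑ a, eta m a * A a m) ^ 2 := by
  have hnull' : k 0 ^ 2 = k 1 ^ 2 + k 2 ^ 2 + k 3 ^ 2 := by
    simp [mdot, eta, Fin.sum_univ_four] at hnull
    nlinarith [hnull]
  have hk0 : k 0 ≠ 0 := by
    intro h
    apply hk
    funext i
    have h1 : k 1 = 0 := by nlinarith [sq_nonneg (k 1), sq_nonneg (k 2), sq_nonneg (k 3)]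
    have h2 : k 2 = 0 := by nlinarith [sq_nonneg (k 1), sq_nonneg (k 2), sq_nonneg (k 3)]
    have h3 : k 3 = 0 := by nlinarith [sq_nonneg (k 1), sq_nonneg (k 2), sq_nonneg (k 3)]
    fin_cases i <;> simp_all
  have e0 := hAk 0
  have e1 := hAk 1
  have e2 := hAk 2
  have e3 := hAk 3
  simp only [Fin.sum_univ_four] at e0 e1 e2 e3
  rw [hA 1 0] at e1
  rw [hA 2 0, hA 2 1] at e2
  rw [hA 3 0, hA 3 1, hA 3 2] at e3
  have H := aux (A 0 0) (A 0 1) (A 0 2) (A 0 3) (A 1 1) (A 1 2) (A 1 3)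
      (A 2 2) (A 2 3) (A 3 3) (k 0) (k 1) (k 2) (k 3) hk0 hnull'
      (by linarith) (by linarith) (by linarith) (by linarith)
  simp [eta, Fin.sum_univ_four]
  rw [hA 1 0, hA 2 0, hA 2 1, hA 3 0, hA 3 1, hA 3 2]
  linarith [H]
end
end

section
/- (Monopole conservation equation, inertial frame.) For every i, the function u ↦ k_j 𝒯^{ij}(u) (sum over j, with k_j = η_{jl}k^l = (−1, n̂)) is constant; equivalently k_j (d/du)𝒯^{ij}(u) = 0 for all u. -/
open scoped BigOperators

noncomputable section

open MeasureTheory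

/-- The point of the null hyperplane `P_u = {y : y⁰ = u + n̂·𝐲}` over the
spatial point `𝐲`. -/
def nullPt (n : EuclideanSpace ℝ (Fin 3)) (u : ℝ) (y : EuclideanSpace ℝ (Fin 3)) :
    Fin 4 → ℝ :=
  ![u + ∑ α, n α * y α, y 0, y 1, y 2]

/-- The null vector `k = (1, n̂)`. -/
def kvec (n : EuclideanSpace ℝ (Fin 3)) : Fin 4 → ℝ := ![1, n 0, n 1, n 2]

/-- The retarded monopole moment `𝒯^{ij}(u) = ∫_{P_u} T^{ij}`. -/
def monopole (T : Fin 4 → Fin 4 → (Fin 4 → ℝ) → ℝ)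
    (n : EuclideanSpace ℝ (Fin 3)) (i j : Fin 4) (u : ℝ) : ℝ :=
  ∫ y : EuclideanSpace ℝ (Fin 3), T i j (nullPt n u y)

/-!
Parametrize `P_u` by `𝐲 ↦ (u + n̂·𝐲, 𝐲)`. Since `T` has compact spatial support, `𝒯^{ij}` may be
differentiated under the integral, giving `k_j 𝒯^{ij}′(u) = ∫ k_j ∂₀T^{ij}`. By the chain rule
`∂_α (T^{iα} ∘ P_u) = n̂_α ∂₀T^{iα} + ∂_α T^{iα}`, so conservation `∂_j T^{ij} = 0` turns the
integrand `-∂₀T^{i0} + n̂_α ∂₀T^{iα}` into the spatial divergence `∂_α (T^{iα} ∘ P_u)` of a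
compactly supported field, whose integral vanishes.
-/

open Function Metric Set

theorem hasDerivAt_integral_of_forall_notMem_eq_zero
    {E F : Type*} [TopologicalSpace E] [T2Space E] [MeasurableSpace E] [OpensMeasurableSpace E]
    [NormedAddCommGroup F] [NormedSpace ℝ F] {μ : Measure E} [IsFiniteMeasureOnCompacts μ]
    {G G' : ℝ → E → F} {K : Set E} (hK : IsCompact K)
    (hG : ∀ u, Continuous (G u)) (hG' : Continuous (uncurry G'))
    (hderiv : ∀ u y, HasDerivAt (G · y) (G' u y) u) (hsupp : ∀ u, ∀ y ∉ K, G u y = 0)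
    (u₀ : ℝ) :
    Integrable (G' u₀) μ ∧ HasDerivAt (fun u ↦ ∫ y, G u y ∂μ) (∫ y, G' u₀ y ∂μ) u₀ := by
  have hG'supp : ∀ u, ∀ y ∉ K, G' u y = 0 := fun u y hy ↦
    (hderiv u y).unique <| by simpa [hsupp _ y hy] using hasDerivAt_const u (0 : F)
  have hcont' : ∀ u, Continuous (G' u) := fun u ↦ hG'.comp (Continuous.prodMk_right u)
  have hint : ∀ u, Integrable (G u) μ := fun u ↦ (hG u).integrable_of_hasCompactSupport
    (HasCompactSupport.intro hK (hsupp u))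
  have hint' : Integrable (G' u₀) μ := (hcont' u₀).integrable_of_hasCompactSupport
    (HasCompactSupport.intro hK (hG'supp u₀))
  obtain ⟨M, hM⟩ := ((isCompact_closedBall u₀ 1).prod hK).exists_bound_of_continuousOn
    hG'.continuousOn
  refine hasDerivAt_integral_of_dominated_loc_of_deriv_le (bound := K.indicator fun _ ↦ M)
    (closedBall_mem_nhds u₀ one_pos) (.of_forall fun u ↦ (hint u).aestronglyMeasurable)
    (hint u₀) hint'.aestronglyMeasurable (.of_forall fun y u hu ↦ ?_)
    ((integrable_indicator_iff hK.measurableSet).2 (integrableOn_const hK.measure_lt_top.ne))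
    (.of_forall fun y u _ ↦ hderiv u y)
  by_cases hy : y ∈ K
  · simpa [indicator_of_mem hy] using hM (u, y) ⟨hu, hy⟩
  · simp [indicator_of_notMem hy, hG'supp u y hy]

section CompactSupport

variable {E : Type*} [NormedAddCommGroup E] [NormedSpace ℝ E] [MeasurableSpace E]
  [OpensMeasurableSpace E] {μ : Measure E} {f : E → ℝ}

theorem HasCompactSupport.integrable_fderiv_apply [IsFiniteMeasureOnCompacts μ]
    (hf : ContDiff ℝ 1 f) (hfc : HasCompactSupport f) (v : E) :
    Integrable (fun x ↦ fderiv ℝ f x v) μ :=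
  ((hf.continuous_fderiv one_ne_zero).clm_apply continuous_const).integrable_of_hasCompactSupport
    (hfc.fderiv_apply ℝ v)

theorem HasCompactSupport.integral_fderiv_apply_eq_zero [FiniteDimensional ℝ E] [BorelSpace E]
    [μ.IsAddHaarMeasure] (hf : ContDiff ℝ 1 f) (hfc : HasCompactSupport f) (v : E) :
    ∫ x, fderiv ℝ f x v ∂μ = 0 := by
  simpa using integral_mul_fderiv_eq_neg_fderiv_mul_of_integrable (μ := μ)
    (f := fun _ ↦ (1 : ℝ)) (g := f) (v := v) (by simp)
    (by simpa using hfc.integrable_fderiv_apply hf v)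
    (by simpa using hf.continuous.integrable_of_hasCompactSupport hfc)
    (fun x _ ↦ differentiableAt_const 1) (fun x _ ↦ hf.differentiable one_ne_zero x)

end CompactSupport

section NullHyperplane

variable (n : EuclideanSpace ℝ (Fin 3))

def nullPtLinear : EuclideanSpace ℝ (Fin 3) →L[ℝ] (Fin 4 → ℝ) :=
  ContinuousLinearMap.pi
    ![innerSL ℝ n, EuclideanSpace.proj 0, EuclideanSpace.proj 1, EuclideanSpace.proj 2]

theorem nullPt_eq_nullPtLinear_add (u : ℝ) (y : EuclideanSpace ℝ (Fin 3)) :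
    nullPt n u y = nullPtLinear n y + u • Pi.single 0 1 := by
  ext i
  fin_cases i <;> simp [nullPt, nullPtLinear, PiLp.inner_apply, mul_comm, add_comm]

theorem nullPtLinear_single (α : Fin 3) :
    nullPtLinear n (EuclideanSpace.single α 1) = n α • Pi.single 0 1 + Pi.single α.succ 1 := by
  ext i
  fin_cases α <;> fin_cases i <;> simp [nullPtLinear, PiLp.inner_apply]

theorem lo_kvec_zero : lo (kvec n) 0 = -1 := by
  simp [lo, eta, kvec]

theorem lo_kvec_succ (α : Fin 3) : lo (kvec n) α.succ = n α := by
  fin_cases α <;> simp [lo, eta, kvec]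

theorem nullPt_spatial_sq (u : ℝ) (y : EuclideanSpace ℝ (Fin 3)) :
    nullPt n u y 1 ^ 2 + nullPt n u y 2 ^ 2 + nullPt n u y 3 ^ 2 = ‖y‖ ^ 2 := by
  simp [nullPt, EuclideanSpace.norm_sq_eq, Fin.sum_univ_three]

theorem hasFDerivAt_nullPt (u : ℝ) (y : EuclideanSpace ℝ (Fin 3)) :
    HasFDerivAt (nullPt n u) (nullPtLinear n) y := by
  simp_rw [funext (nullPt_eq_nullPtLinear_add n u)]
  exact (nullPtLinear n).hasFDerivAt.add_const _

theorem hasDerivAt_nullPt_retardedTime (u : ℝ) (y : EuclideanSpace ℝ (Fin 3)) :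
    HasDerivAt (nullPt n · y) (Pi.single 0 1) u := by
  simp_rw [nullPt_eq_nullPtLinear_add n _ y]
  simpa using
    ((hasDerivAt_id u).smul_const (Pi.single 0 1 : Fin 4 → ℝ)).const_add (nullPtLinear n y)

theorem continuous_uncurry_nullPt : Continuous (uncurry (nullPt n)) := by
  simp_rw [uncurry_def, nullPt_eq_nullPtLinear_add]
  fun_prop

theorem contDiff_nullPt (u : ℝ) : ContDiff ℝ 1 (nullPt n u) := by
  simp_rw [funext (nullPt_eq_nullPtLinear_add n u)]
  exact (nullPtLinear n).contDiff.add contDiff_const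

theorem fderiv_comp_nullPt_single {f : (Fin 4 → ℝ) → ℝ} (hf : Differentiable ℝ f) (u : ℝ)
    (y : EuclideanSpace ℝ (Fin 3)) (α : Fin 3) :
    fderiv ℝ (f ∘ nullPt n u) y (EuclideanSpace.single α 1) =
      n α * fderiv ℝ f (nullPt n u y) (Pi.single 0 1) +
        fderiv ℝ f (nullPt n u y) (Pi.single α.succ 1) := by
  rw [((hf _).hasFDerivAt.comp y (hasFDerivAt_nullPt n u y)).fderiv,
    ContinuousLinearMap.comp_apply, nullPtLinear_single, map_add, map_smul, smul_eq_mul]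

variable {n} {R : ℝ} {f : (Fin 4 → ℝ) → ℝ}

theorem comp_nullPt_eq_zero
    (hsupp : ∀ x : Fin 4 → ℝ, R ^ 2 ≤ x 1 ^ 2 + x 2 ^ 2 + x 3 ^ 2 → f x = 0) (u : ℝ)
    {y : EuclideanSpace ℝ (Fin 3)} (hy : y ∉ closedBall 0 |R|) : f (nullPt n u y) = 0 := by
  refine hsupp _ ?_
  rw [nullPt_spatial_sq]
  rw [mem_closedBall_zero_iff, not_le] at hy
  exact sq_le_sq.2 (by simpa using hy.le)

end NullHyperplane

section Monopole

variable {n : EuclideanSpace ℝ (Fin 3)} {R : ℝ}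

theorem hasDerivAt_monopole {T : Fin 4 → Fin 4 → (Fin 4 → ℝ) → ℝ} {i j : Fin 4}
    (hT : ContDiff ℝ 1 (T i j))
    (hsupp : ∀ x : Fin 4 → ℝ, R ^ 2 ≤ x 1 ^ 2 + x 2 ^ 2 + x 3 ^ 2 → T i j x = 0) (u : ℝ) :
    Integrable (fun y ↦ fderiv ℝ (T i j) (nullPt n u y) (Pi.single 0 1)) ∧
      HasDerivAt (monopole T n i j) (∫ y, fderiv ℝ (T i j) (nullPt n u y) (Pi.single 0 1)) u :=
  hasDerivAt_integral_of_forall_notMem_eq_zero (isCompact_closedBall 0 |R|)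
    (fun u ↦ hT.continuous.comp (contDiff_nullPt n u).continuous)
    (((hT.continuous_fderiv one_ne_zero).comp (continuous_uncurry_nullPt n)).clm_apply
      continuous_const)
    (fun u y ↦ (hT.differentiable one_ne_zero _).hasFDerivAt.comp_hasDerivAt u
      (hasDerivAt_nullPt_retardedTime n u y))
    (fun u _ hy ↦ comp_nullPt_eq_zero hsupp u hy) u

theorem sum_lo_kvec_mul_fderiv_eq_sum_fderiv_comp_nullPt {f : Fin 4 → (Fin 4 → ℝ) → ℝ}
    (hf : ∀ j, Differentiable ℝ (f j)) (u : ℝ) (y : EuclideanSpace ℝ (Fin 3))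
    (hdiv : ∑ j, fderiv ℝ (f j) (nullPt n u y) (Pi.single j 1) = 0) :
    ∑ j, lo (kvec n) j * fderiv ℝ (f j) (nullPt n u y) (Pi.single 0 1) =
      ∑ α : Fin 3, fderiv ℝ (f α.succ ∘ nullPt n u) y (EuclideanSpace.single α 1) := by
  rw [Fin.sum_univ_succ] at hdiv ⊢
  simp only [lo_kvec_zero, lo_kvec_succ, fderiv_comp_nullPt_single n (hf _),
    Finset.sum_add_distrib]
  linarith

theorem sum_lo_kvec_mul_integral_fderiv_eq_zero {f : Fin 4 → (Fin 4 → ℝ) → ℝ}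
    (hf : ∀ j, ContDiff ℝ 1 (f j)) (hdiv : ∀ x, ∑ j, fderiv ℝ (f j) x (Pi.single j 1) = 0)
    (hsupp : ∀ j (x : Fin 4 → ℝ), R ^ 2 ≤ x 1 ^ 2 + x 2 ^ 2 + x 3 ^ 2 → f j x = 0) (u : ℝ)
    (hint : ∀ j, Integrable (fun y ↦ fderiv ℝ (f j) (nullPt n u y) (Pi.single 0 1))) :
    ∑ j, lo (kvec n) j * ∫ y, fderiv ℝ (f j) (nullPt n u y) (Pi.single 0 1) = 0 := by
  have hcomp (j) : HasCompactSupport (f j ∘ nullPt n u) :=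
    .intro (isCompact_closedBall 0 |R|) fun _ hy ↦ comp_nullPt_eq_zero (hsupp j) u hy
  have hC (j) : ContDiff ℝ 1 (f j ∘ nullPt n u) := (hf j).comp (contDiff_nullPt n u)
  calc ∑ j, lo (kvec n) j * ∫ y, fderiv ℝ (f j) (nullPt n u y) (Pi.single 0 1)
      = ∫ y, ∑ j, lo (kvec n) j * fderiv ℝ (f j) (nullPt n u y) (Pi.single 0 1) := by
        rw [integral_finsetSum _ fun j _ ↦ (hint j).const_mul _]
        simp_rw [integral_const_mul]
    _ = ∫ y, ∑ α : Fin 3, fderiv ℝ (f α.succ ∘ nullPt n u) y (EuclideanSpace.single α 1) := by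
        congr with y
        exact sum_lo_kvec_mul_fderiv_eq_sum_fderiv_comp_nullPt
          (fun j ↦ (hf j).differentiable one_ne_zero) u y (hdiv _)
    _ = ∑ α : Fin 3, ∫ y, fderiv ℝ (f α.succ ∘ nullPt n u) y (EuclideanSpace.single α 1) :=
        integral_finsetSum _ fun α _ ↦ (hcomp _).integrable_fderiv_apply (hC _) _
    _ = 0 := Finset.sum_eq_zero fun α _ ↦ (hcomp _).integral_fderiv_apply_eq_zero (hC _) _

end Monopole

theorem monopole_conservation_general
    (T : Fin 4 → Fin 4 → (Fin 4 → ℝ) → ℝ)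
    (hTsmooth : ∀ i j, ContDiff ℝ (⊤ : ℕ∞) (T i j))
    (hTcons : ∀ i y, ∑ j, fderiv ℝ (T i j) y (Pi.single j 1) = 0)
    (R : ℝ)
    (hsupp : ∀ i j (y : Fin 4 → ℝ),
      R ^ 2 ≤ (y 1) ^ 2 + (y 2) ^ 2 + (y 3) ^ 2 → T i j y = 0)
    (n : EuclideanSpace ℝ (Fin 3)) :
    ∀ i : Fin 4,
      (∀ u u' : ℝ, ∑ j, lo (kvec n) j * monopole T n i j u
          = ∑ j, lo (kvec n) j * monopole T n i j u') ∧
      (∀ u : ℝ, ∑ j, lo (kvec n) j * deriv (fun s => monopole T n i j s) u = 0) := by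
  intro i
  have hT (j) : ContDiff ℝ 1 (T i j) := (hTsmooth i j).of_le (by simp)
  have hmono (j) (u) := hasDerivAt_monopole (n := n) (hT j) (hsupp i j) u
  have hrate (u) := sum_lo_kvec_mul_integral_fderiv_eq_zero hT (hTcons i) (hsupp i) u
    fun j ↦ (hmono j u).1
  have hsum (u) : HasDerivAt (fun s ↦ ∑ j, lo (kvec n) j * monopole T n i j s) 0 u := by
    rw [← hrate u]
    exact .fun_sum fun j _ ↦ (hmono j u).2.const_mul _
  refine ⟨is_const_of_deriv_eq_zero (fun u ↦ (hsum u).differentiableAt)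
    fun u ↦ (hsum u).deriv, fun u ↦ ?_⟩
  simp_rw [(hmono _ u).2.deriv]
  exact hrate u

/-- Monopole conservation equation: `k_j (d/du)𝒯^{ij}(u) = 0`, i.e. the
contracted retarded monopole moment `k_j 𝒯^{ij}` is constant in retarded
time. -/
theorem monopole_conservation
    (T : Fin 4 → Fin 4 → (Fin 4 → ℝ) → ℝ)
    (hTsmooth : ∀ i j, ContDiff ℝ (⊤ : ℕ∞) (T i j))
    (hTsymm : ∀ i j y, T i j y = T j i y)
    (hTcons : ∀ i y, ∑ j, fderiv ℝ (T i j) y (Pi.single j 1) = 0)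
    (R : ℝ) (hR : 0 < R)
    (hsupp : ∀ i j (y : Fin 4 → ℝ),
      R ^ 2 ≤ (y 1) ^ 2 + (y 2) ^ 2 + (y 3) ^ 2 → T i j y = 0)
    (n : EuclideanSpace ℝ (Fin 3)) (hn : ‖n‖ = 1) :
    ∀ i : Fin 4,
      (∀ u u' : ℝ, ∑ j, lo (kvec n) j * monopole T n i j u
          = ∑ j, lo (kvec n) j * monopole T n i j u') ∧
      (∀ u : ℝ, ∑ j, lo (kvec n) j * deriv (fun s => monopole T n i j s) u = 0) :=
  monopole_conservation_general T hTsmooth hTcons R hsupp n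
end
end

section
/- (Leading asymptotics of the retarded solution.) Fix u ∈ ℝ and a unit vector n̂ ∈ ℝ³, and set x_r = (u + r, r n̂). Then lim_{r→∞} r · γ*^{ij}(x_r) = 4 𝒯^{ij}(u) for every i, j; that is, the retarded potential satisfies γ*^{ij} = (4/r) 𝒯^{ij} + o(1/r) along outgoing null rays, where 𝒯^{ij}(u) = ∫_{ℝ³} T^{ij}(u + n̂·𝐲, 𝐲) d³𝐲 is the retarded monopole moment over the null hyperplane {y : y⁰ = u + n̂·𝐲}. -/
open scoped BigOperators

noncomputable section

open MeasureTheory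

/-- The spatial part `𝐱` of `x = (x⁰,𝐱) ∈ ℝ⁴`, as a point of Euclidean 3-space. -/
def spat (x : Fin 4 → ℝ) : EuclideanSpace ℝ (Fin 3) := WithLp.toLp 2 (fun α => x α.succ)

/-- The retarded potential
`γ*^{ij}(x) = 4 ∫ T^{ij}(x⁰ − |𝐱 − 𝐲|, 𝐲)/|𝐱 − 𝐲| d³𝐲`. -/
def retPot (T : Fin 4 → Fin 4 → (Fin 4 → ℝ) → ℝ) (i j : Fin 4)
    (x : Fin 4 → ℝ) : ℝ :=
  4 * ∫ y : EuclideanSpace ℝ (Fin 3),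
        T i j ![x 0 - ‖spat x - y‖, y 0, y 1, y 2] / ‖spat x - y‖

/-!
Along the outgoing null ray `x_ρ = (u + ρ, ρ n̂)` the distance `‖ρ n̂ - 𝐲‖` is
`ρ - n̂·𝐲 + o(1)`, so the retarded time `u + ρ - ‖ρ n̂ - 𝐲‖` tends to `u + n̂·𝐲` and
`ρ / ‖ρ n̂ - 𝐲‖` tends to `1`: the integrand of `ρ γ*(x_ρ)` converges pointwise to the
integrand of the monopole moment. For `ρ ≥ 2R` it is bounded by `2C` on the ball of radius `R`
carrying the support of `T`, and dominated convergence gives the limit.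
-/

open Filter Topology RealInnerProductSpace

section NormedSpace

variable {E : Type*} [NormedAddCommGroup E] [NormedSpace ℝ E] {n : E}

lemma sub_norm_le_norm_smul_sub (hn : ‖n‖ = 1) {ρ : ℝ} (hρ : 0 ≤ ρ) (y : E) :
    ρ - ‖y‖ ≤ ‖ρ • n - y‖ := by
  simpa [norm_smul, hn, abs_of_nonneg hρ] using norm_sub_norm_le (ρ • n) y

lemma norm_smul_sub_le_add_norm (hn : ‖n‖ = 1) {ρ : ℝ} (hρ : 0 ≤ ρ) (y : E) :
    ‖ρ • n - y‖ ≤ ρ + ‖y‖ := by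
  simpa [norm_smul, hn, abs_of_nonneg hρ] using norm_sub_le (ρ • n) y

lemma tendsto_norm_smul_sub_div_atTop (hn : ‖n‖ = 1) (y : E) :
    Tendsto (fun ρ : ℝ => ‖ρ • n - y‖ / ρ) atTop (𝓝 1) := by
  have hy : Tendsto (fun ρ : ℝ => ‖y‖ / ρ) atTop (𝓝 0) :=
    tendsto_const_nhds.div_atTop tendsto_id
  refine tendsto_of_tendsto_of_tendsto_of_le_of_le' (by simpa using hy.const_sub 1)
    (by simpa using hy.const_add 1) ?_ ?_ <;>
    filter_upwards [eventually_gt_atTop 0] with ρ hρ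
  · rw [one_sub_div hρ.ne']
    gcongr
    exact sub_norm_le_norm_smul_sub hn hρ.le y
  · rw [one_add_div hρ.ne']
    gcongr
    exact norm_smul_sub_le_add_norm hn hρ.le y

end NormedSpace

section InnerProductSpace

variable {E : Type*} [NormedAddCommGroup E] [InnerProductSpace ℝ E] {n : E}

lemma tendsto_sub_norm_smul_sub_atTop (hn : ‖n‖ = 1) (y : E) :
    Tendsto (fun ρ : ℝ => ρ - ‖ρ • n - y‖) atTop (𝓝 ⟪n, y⟫) := by
  have hnum : Tendsto (fun ρ : ℝ => 2 * ⟪n, y⟫ - ‖y‖ ^ 2 / ρ) atTop (𝓝 (2 * ⟪n, y⟫)) := by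
    simpa using (tendsto_const_nhds.div_atTop tendsto_id).const_sub (2 * ⟪n, y⟫)
  have hden : Tendsto (fun ρ : ℝ => 1 + ‖ρ • n - y‖ / ρ) atTop (𝓝 2) := by
    simpa [one_add_one_eq_two] using (tendsto_norm_smul_sub_div_atTop hn y).const_add 1
  have hlim := hnum.div hden two_ne_zero
  rw [mul_div_cancel_left₀ _ two_ne_zero] at hlim
  refine hlim.congr' ?_
  -- `ρ - d = (ρ² - d²) / (ρ + d)` for `d = ‖ρ • n - y‖`, and `ρ² - d² = 2ρ⟪n, y⟫ - ‖y‖²`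
  filter_upwards [eventually_gt_atTop 0] with ρ hρ
  have hd : ‖ρ • n - y‖ ^ 2 = ρ ^ 2 - 2 * ρ * ⟪n, y⟫ + ‖y‖ ^ 2 := by
    rw [norm_sub_sq_real, real_inner_smul_left, norm_smul, hn, Real.norm_of_nonneg hρ.le]
    ring
  have hpos : 0 < 1 + ‖ρ • n - y‖ / ρ := by positivity
  rw [Pi.div_apply, div_eq_iff hpos.ne']
  field_simp
  linear_combination hd

lemma tendsto_mul_retarded_integrand_atTop (hn : ‖n‖ = 1) {f : ℝ → E → ℝ}
    (hf : Continuous (Function.uncurry f)) (u : ℝ) (y : E) :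
    Tendsto (fun ρ : ℝ => ρ * (f (u + ρ - ‖ρ • n - y‖) y / ‖ρ • n - y‖)) atTop
      (𝓝 (f (u + ⟪n, y⟫) y)) := by
  have htime : Tendsto (fun ρ : ℝ => u + ρ - ‖ρ • n - y‖) atTop (𝓝 (u + ⟪n, y⟫)) := by
    simpa only [add_sub_assoc] using (tendsto_sub_norm_smul_sub_atTop hn y).const_add u
  have hval : Tendsto (fun ρ : ℝ => f (u + ρ - ‖ρ • n - y‖) y) atTop (𝓝 (f (u + ⟪n, y⟫) y)) :=
    (hf.tendsto (u + ⟪n, y⟫, y)).comp (htime.prodMk_nhds tendsto_const_nhds)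
  have hratio : Tendsto (fun ρ : ℝ => ρ / ‖ρ • n - y‖) atTop (𝓝 1) := by
    simpa using (tendsto_norm_smul_sub_div_atTop hn y).inv₀ one_ne_zero
  simpa only [one_mul, mul_div_assoc', div_mul_eq_mul_div] using hratio.mul hval

lemma norm_mul_retarded_integrand_le (hn : ‖n‖ = 1) {f : ℝ → E → ℝ} {C R : ℝ}
    (hC : ∀ t y, |f t y| ≤ C) (hR : ∀ t y, R ≤ ‖y‖ → f t y = 0) {ρ : ℝ} (hρ : 0 < ρ)
    (hρR : 2 * R ≤ ρ) (u : ℝ) (y : E) :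
    ‖ρ * (f (u + ρ - ‖ρ • n - y‖) y / ‖ρ • n - y‖)‖ ≤
      (Metric.ball 0 R).indicator (fun _ => 2 * C) y := by
  by_cases hy : y ∈ Metric.ball 0 R
  · rw [Set.indicator_of_mem hy]
    have hd : ρ / 2 ≤ ‖ρ • n - y‖ := by
      linarith [mem_ball_zero_iff.mp hy, sub_norm_le_norm_smul_sub hn hρ.le y]
    have hfC := hC (u + ρ - ‖ρ • n - y‖) y
    have hC0 : 0 ≤ C := (abs_nonneg _).trans hfC
    calc ‖ρ * (f (u + ρ - ‖ρ • n - y‖) y / ‖ρ • n - y‖)‖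
        = ρ * |f (u + ρ - ‖ρ • n - y‖) y| / ‖ρ • n - y‖ := by
          rw [Real.norm_eq_abs, abs_mul, abs_div, abs_of_pos hρ, abs_norm, mul_div_assoc]
      _ ≤ ρ * C / (ρ / 2) := by gcongr
      _ = 2 * C := by field_simp
  · rw [Set.indicator_of_notMem hy, hR _ y (by simpa using hy)]
    simp

variable [MeasurableSpace E] [BorelSpace E] [ProperSpace E] {μ : Measure E}
  [IsFiniteMeasureOnCompacts μ]

theorem tendsto_mul_integral_retarded_atTop (hn : ‖n‖ = 1) {f : ℝ → E → ℝ}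
    (hf : Continuous (Function.uncurry f)) {C R : ℝ} (hC : ∀ t y, |f t y| ≤ C)
    (hR : ∀ t y, R ≤ ‖y‖ → f t y = 0) (u : ℝ) :
    Tendsto (fun ρ : ℝ => ρ * ∫ y, f (u + ρ - ‖ρ • n - y‖) y / ‖ρ • n - y‖ ∂μ) atTop
      (𝓝 (∫ y, f (u + ⟪n, y⟫) y ∂μ)) := by
  simp_rw [← integral_const_mul]
  refine tendsto_integral_filter_of_dominated_convergence
    ((Metric.ball (0 : E) R).indicator fun _ => 2 * C) ?_ ?_
    ((integrableOn_const measure_ball_lt_top.ne).integrable_indicator measurableSet_ball)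
    (ae_of_all _ (tendsto_mul_retarded_integrand_atTop hn hf u))
  · refine .of_forall fun ρ => ?_
    have hcont : Continuous fun y => f (u + ρ - ‖ρ • n - y‖) y :=
      hf.comp (.prodMk (by fun_prop) continuous_id)
    exact (measurable_const.mul (hcont.measurable.div (by fun_prop))).aestronglyMeasurable
  · filter_upwards [eventually_gt_atTop 0, eventually_ge_atTop (2 * R)] with ρ hρ hρR
    exact ae_of_all _ (norm_mul_retarded_integrand_le hn hC hR hρ hρR u)

end InnerProductSpace

lemma spat_eq_smul (n : EuclideanSpace ℝ (Fin 3)) (ρ u : ℝ) :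
    spat ![u + ρ, ρ * n 0, ρ * n 1, ρ * n 2] = ρ • n := by
  ext α
  fin_cases α <;> simp [spat]

lemma inner_eq_sum_mul (n y : EuclideanSpace ℝ (Fin 3)) : ⟪n, y⟫ = ∑ α, n α * y α := by
  simp [PiLp.inner_apply, mul_comm]

theorem retarded_potential_leading_asymptotics_general
    (T : Fin 4 → Fin 4 → (Fin 4 → ℝ) → ℝ)
    (hTsmooth : ∀ i j, ContDiff ℝ (⊤ : ℕ∞) (T i j))
    (C : ℝ) (hTbdd : ∀ i j y, |T i j y| ≤ C)
    (R : ℝ)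
    (hsupp : ∀ i j (y : Fin 4 → ℝ),
      R ^ 2 ≤ (y 1) ^ 2 + (y 2) ^ 2 + (y 3) ^ 2 → T i j y = 0)
    (n : EuclideanSpace ℝ (Fin 3)) (hn : ‖n‖ = 1) (u : ℝ) :
    ∀ i j : Fin 4,
      Filter.Tendsto
        (fun ρ : ℝ => ρ * retPot T i j ![u + ρ, ρ * n 0, ρ * n 1, ρ * n 2])
        Filter.atTop (nhds (4 * monopole T n i j u)) := by
  intro i j
  set f : ℝ → EuclideanSpace ℝ (Fin 3) → ℝ := fun t y => T i j ![t, y 0, y 1, y 2]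
  have hf : Continuous (Function.uncurry f) :=
    (hTsmooth i j).continuous.comp (continuous_pi fun k => by fin_cases k <;> fun_prop)
  have hf_supp : ∀ t y, |R| ≤ ‖y‖ → f t y = 0 := fun t y hy => by
    have hRy : R ^ 2 ≤ ‖y‖ ^ 2 :=
      sq_le_sq' (by linarith [neg_abs_le R]) ((le_abs_self R).trans hy)
    exact hsupp i j _ (by simpa [EuclideanSpace.norm_sq_eq, Fin.sum_univ_three] using hRy)
  have hlim := (tendsto_mul_integral_retarded_atTop (μ := volume) hn hf
    (fun _ _ => hTbdd i j _) hf_supp u).const_mul 4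
  simp only [f, inner_eq_sum_mul] at hlim
  refine hlim.congr fun ρ => ?_
  rw [retPot, spat_eq_smul, Matrix.cons_val_zero]
  ring

/-- Leading asymptotics of the retarded solution along outgoing null rays:
`r · γ*^{ij} → 4 𝒯^{ij}(u)` as `r → ∞` with `x_r = (u + r, r n̂)`. -/
theorem retarded_potential_leading_asymptotics
    (T : Fin 4 → Fin 4 → (Fin 4 → ℝ) → ℝ)
    (hTsmooth : ∀ i j, ContDiff ℝ (⊤ : ℕ∞) (T i j))
    (hTsymm : ∀ i j y, T i j y = T j i y)
    (C : ℝ) (hTbdd : ∀ i j y, |T i j y| ≤ C)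
    (R : ℝ) (hR : 0 < R)
    (hsupp : ∀ i j (y : Fin 4 → ℝ),
      R ^ 2 ≤ (y 1) ^ 2 + (y 2) ^ 2 + (y 3) ^ 2 → T i j y = 0)
    (n : EuclideanSpace ℝ (Fin 3)) (hn : ‖n‖ = 1) (u : ℝ) :
    ∀ i j : Fin 4,
      Filter.Tendsto
        (fun ρ : ℝ => ρ * retPot T i j ![u + ρ, ρ * n 0, ρ * n 1, ρ * n 2])
        Filter.atTop (nhds (4 * monopole T n i j u)) :=
  retarded_potential_leading_asymptotics_general T hTsmooth C hTbdd R hsupp n hn u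
end
end
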